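/- A self-inversive polynomial P(z) = Σ_{j=0}^d A_j z^j satisfying |A_d| ≥ (1/2) Σ_{j=0}^{d-1} |A_j − μ A_{j+1}| for some complex μ with |μ| = 1 has all its zeros on the unit circle. -/

import Mathlib

/-!
Multiplying `P` by `X - μ` gives a self-inversive `Q` of degree `d + 1` whose inner coefficients
are the `A_j - μ A_{j+1}`, so the hypothesis says that their total size is at most `2 |A_d|`, the
combined size of the two extreme coefficients of `Q`.

Suppose first that this inequality is strict. After rotating `Q` by a unimodular constant, the
function `x ↦ e^{-i(d+1)x/2} Q(e^{ix})` is real valued, and up to an error smaller than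
`2 |A_d|` it equals the contribution `2 Re(A_d e^{i(d+1)x/2})` of the extreme terms. That
contribution alternates in sign at `d + 2` equally spaced nodes spanning one period, so the
intermediate value theorem gives `d + 1` distinct zeros of `Q` on the unit circle: all of them.

In the equality case, enlarging both extreme coefficients by a factor `1 + t` makes the inequality
strict. A polynomial with unimodular roots has `|Q_t(z)| ≥ |lead Q_t| · ||z| - 1|^(d+1)`, while
`|Q_t(z)| = O(t)` at a root `z` of `Q`; letting `t → 0` forces `|z| = 1`.
-/

open Polynomial Complex Finset
open scoped Real

lemma exists_mem_Ioo_eq_zero_of_mul_neg {f : ℝ → ℝ} {a b : ℝ} (hab : a ≤ b)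
    (hf : ContinuousOn f (Set.Icc a b)) (h : f a * f b < 0) : ∃ c ∈ Set.Ioo a b, f c = 0 := by
  rcases mul_neg_iff.mp h with ⟨ha, hb⟩ | ⟨ha, hb⟩
  · exact intermediate_value_Ioo' hab hf ⟨hb, ha⟩
  · exact intermediate_value_Ioo hab hf ⟨ha, hb⟩

lemma exists_strictMono_zeros_of_alternating {f : ℝ → ℝ} (hf : Continuous f) {θ : ℕ → ℝ}
    (hθ : Monotone θ) (halt : ∀ l, 0 < (-1) ^ l * f (θ l)) :
    ∃ σ : ℕ → ℝ, StrictMono σ ∧ ∀ l, σ l ∈ Set.Ioo (θ l) (θ (l + 1)) ∧ f (σ l) = 0 := by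
  have hzero : ∀ l, ∃ s ∈ Set.Ioo (θ l) (θ (l + 1)), f s = 0 := fun l =>
    exists_mem_Ioo_eq_zero_of_mul_neg (hθ l.le_succ) hf.continuousOn <| by
      have h := mul_pos (halt l) (halt (l + 1))
      rcases neg_one_pow_eq_or ℝ l with hl | hl <;> simp only [pow_succ, hl] at h <;> linarith
  choose σ hσ hσ0 using hzero
  exact ⟨σ, strictMono_nat_of_lt_succ fun l => (hσ l).2.trans (hσ (l + 1)).1,
    fun l => ⟨hσ l, hσ0 l⟩⟩

lemma mul_exp_sub_arg_mul_I (a : ℂ) (l : ℕ) :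
    a * cexp ((l * π - arg a) * I) = ‖a‖ * (-1) ^ l := by
  calc a * cexp ((l * π - arg a) * I)
      = ‖a‖ * cexp (arg a * I) * cexp ((l * π - arg a) * I) := by rw [norm_mul_exp_arg_mul_I]
    _ = ‖a‖ * cexp (l * (π * I)) := by rw [mul_assoc, ← exp_add]; ring_nf
    _ = ‖a‖ * (-1) ^ l := by rw [exp_nat_mul, exp_pi_mul_I]

namespace Polynomial

lemma mem_of_natDegree_le_card {R : Type*} [CommRing R] [IsDomain R] {p : R[X]}
    (hp : p ≠ 0) {s : Finset R} (hs : ∀ a ∈ s, p.IsRoot a) (hcard : p.natDegree ≤ s.card)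
    {z : R} (hz : p.IsRoot z) : z ∈ s := by
  classical
  have hsub : s ⊆ p.roots.toFinset := fun a ha =>
    Multiset.mem_toFinset.mpr ((mem_roots hp).mpr (hs a ha))
  rw [Finset.eq_of_subset_of_card_le hsub
    ((Multiset.toFinset_card_le _).trans ((card_roots' p).trans hcard))]
  exact Multiset.mem_toFinset.mpr ((mem_roots hp).mpr hz)

lemma norm_eq_one_of_isRoot_of_strictMono {R : ℂ[X]} (hR : R ≠ 0) {σ : ℕ → ℝ}
    (hσ : StrictMono σ) {a : ℝ} (hσa : ∀ l < R.natDegree, σ l ∈ Set.Ico a (a + 2 * π))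
    (hroot : ∀ l < R.natDegree, R.IsRoot (cexp (σ l * I))) {z : ℂ} (hz : R.IsRoot z) :
    ‖z‖ = 1 := by
  classical
  set s := (range R.natDegree).image fun l => cexp (σ l * I)
  have hcard : s.card = R.natDegree := by
    rw [card_image_of_injOn, card_range]
    intro l hl l' hl' h
    have hl := mem_range.mp hl
    have hl' := mem_range.mp hl'
    refine hσ.injective (Circle.exp_injOn_Ico (by linarith) (hσa l hl) (hσa l' hl') ?_)
    exact Subtype.ext (by simpa using h)
  have hzs : z ∈ s := mem_of_natDegree_le_card hR
    (by simpa [s] using hroot) hcard.ge hz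
  obtain ⟨l, -, rfl⟩ := mem_image.mp hzs
  exact norm_exp_ofReal_mul_I _

lemma norm_leadingCoeff_mul_le_norm_eval {p : ℂ[X]} (hp : ∀ a ∈ p.roots, ‖a‖ = 1)
    (z : ℂ) : ‖p.leadingCoeff‖ * |‖z‖ - 1| ^ p.natDegree ≤ ‖p.eval z‖ := by
  have hsplit :=
    C_leadingCoeff_mul_prod_multiset_X_sub_C (IsAlgClosed.card_roots_eq_natDegree (p := p))
  conv_rhs => rw [← hsplit]
  rw [eval_mul, eval_C, eval_multiset_prod, norm_mul, Multiset.map_map,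
    ← normHom_apply (α := ℂ) (Multiset.prod _), map_multiset_prod, Multiset.map_map,
    ← IsAlgClosed.card_roots_eq_natDegree]
  gcongr
  calc |‖z‖ - 1| ^ Multiset.card p.roots = (p.roots.map fun _ => |‖z‖ - 1|).prod := by
        rw [Multiset.map_const', Multiset.prod_replicate]
    _ ≤ _ := Multiset.prod_map_le_prod_map₀ _ _ (fun _ _ => abs_nonneg _) fun a ha => by
        simpa [hp a ha] using abs_norm_sub_norm_le z a

/-- The classical `P = ε P*` with `P*(z) = z ^ natDegree P * conj (P (1 / conj z))`; see
`isSelfInversive_iff_coeff` for the coefficient form `A_j = ε conj A_{d-j}`. -/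
def IsSelfInversive (P : ℂ[X]) (ε : ℂ) : Prop :=
  P = C ε * (P.map (starRingEnd ℂ)).reverse

lemma isSelfInversive_iff_coeff {P : ℂ[X]} {ε : ℂ} :
    IsSelfInversive P ε ↔
      ∀ j ≤ P.natDegree, P.coeff j = ε * starRingEnd ℂ (P.coeff (P.natDegree - j)) := by
  have hdeg := natDegree_map_eq_of_injective (RingHom.injective (starRingEnd ℂ)) P
  refine ⟨fun h j hj => ?_, fun h => ext fun j => ?_⟩
  · conv_lhs => rw [h]
    rw [coeff_C_mul, coeff_reverse, hdeg, revAt_le hj, coeff_map]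
  · rw [coeff_C_mul, coeff_reverse, hdeg, coeff_map]
    rcases le_or_gt j P.natDegree with hj | hj
    · rw [revAt_le hj, h j hj]
    · rw [revAt_eq_self_of_lt hj, coeff_eq_zero_of_natDegree_lt hj, map_zero, mul_zero]

lemma IsSelfInversive.mul {P Q : ℂ[X]} {ε δ : ℂ} (hP : IsSelfInversive P ε)
    (hQ : IsSelfInversive Q δ) : IsSelfInversive (P * Q) (ε * δ) := by
  unfold IsSelfInversive at *
  rw [Polynomial.map_mul, reverse_mul_of_domain, C_mul]
  conv_lhs => rw [hP, hQ]
  ring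

lemma isSelfInversive_X_sub_C {μ : ℂ} (hμ : ‖μ‖ = 1) : IsSelfInversive (X - C μ) (-μ) := by
  have hμμ : μ * starRingEnd ℂ μ = 1 := by rw [mul_conj', hμ]; norm_num
  rw [isSelfInversive_iff_coeff, natDegree_X_sub_C]
  intro j hj
  interval_cases j <;> simp [hμμ]

lemma isSelfInversive_C {a : ℂ} (ha : a ≠ 0) : IsSelfInversive (C a) (a / starRingEnd ℂ a) := by
  rw [IsSelfInversive, Polynomial.map_C, reverse_C, ← C_mul, div_mul_cancel₀ a (by simpa using ha)]

lemma IsSelfInversive.eval_eq {P : ℂ[X]} {ε : ℂ} (hP : IsSelfInversive P ε) {w : ℂ}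
    (hw : ‖w‖ = 1) : P.eval w = ε * w ^ P.natDegree * starRingEnd ℂ (P.eval w) := by
  have hww : w * starRingEnd ℂ w = 1 := by rw [mul_conj', hw]; norm_num
  let _ : Invertible (starRingEnd ℂ w) := invertibleOfLeftInverse _ w hww
  have hrev := eval₂_reverse_mul_pow (RingHom.id ℂ) (starRingEnd ℂ w) (P.map (starRingEnd ℂ))
  rw [invOf_eq_left_inv hww, natDegree_map_eq_of_injective (RingHom.injective _),
    eval₂_id, eval₂_id, eval_map, eval₂_at_apply] at hrev
  rw [← hrev]
  conv_lhs => rw [hP, eval_mul, eval_C]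
  rw [mul_assoc, mul_left_comm (w ^ _), ← mul_pow, hww, one_pow, mul_one]

lemma IsSelfInversive.norm_coeff_zero {P : ℂ[X]} {ε : ℂ} (hP : IsSelfInversive P ε)
    (hε : ‖ε‖ = 1) : ‖P.coeff 0‖ = ‖P.leadingCoeff‖ := by
  rw [isSelfInversive_iff_coeff.mp hP 0 (Nat.zero_le _), Nat.sub_zero, norm_mul, hε, one_mul,
    norm_conj, leadingCoeff]

noncomputable def symmetricEval (R : ℂ[X]) (x : ℝ) : ℂ :=
  cexp (-(R.natDegree * x / 2 * I)) * R.eval (cexp (x * I))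

lemma continuous_symmetricEval (R : ℂ[X]) : Continuous (symmetricEval R) := by
  unfold symmetricEval
  fun_prop

lemma IsSelfInversive.conj_symmetricEval {R : ℂ[X]} (hR : IsSelfInversive R 1) (x : ℝ) :
    starRingEnd ℂ (symmetricEval R x) = symmetricEval R x := by
  have hw : ‖cexp (x * I)‖ = 1 := norm_exp_ofReal_mul_I x
  have hphase : cexp (-(R.natDegree * x / 2 * I)) * cexp (x * I) ^ R.natDegree =
      cexp (R.natDegree * x / 2 * I) := by
    rw [← exp_nat_mul, ← exp_add]; ring_nf
  unfold symmetricEval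
  conv_rhs => rw [hR.eval_eq hw, one_mul, ← mul_assoc, hphase]
  rw [map_mul, ← exp_conj]
  congr 2
  simp [map_ofNat]

lemma IsSelfInversive.isRoot_of_symmetricEval_re_eq_zero {R : ℂ[X]} (hR : IsSelfInversive R 1)
    {x : ℝ} (hx : (symmetricEval R x).re = 0) : R.IsRoot (cexp (x * I)) := by
  have h0 : symmetricEval R x = 0 := by
    rw [← conj_eq_iff_re.mp (hR.conj_symmetricEval x), hx, ofReal_zero]
  simpa [symmetricEval, exp_ne_zero] using h0

lemma IsSelfInversive.abs_symmetricEval_re_sub_le {R : ℂ[X]} (hR : IsSelfInversive R 1) {n : ℕ}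
    (hdeg : R.natDegree = n + 1) (x : ℝ) :
    |(symmetricEval R x).re - 2 * (R.coeff (n + 1) * cexp ((n + 1) * x / 2 * I)).re| ≤
      ∑ j ∈ range n, ‖R.coeff (j + 1)‖ := by
  set a := R.coeff (n + 1)
  set u := cexp ((n + 1) * x / 2 * I)
  set w := cexp (x * I)
  set mid := ∑ j ∈ range n, R.coeff (j + 1) * w ^ (j + 1)
  have hw : ‖w‖ = 1 := norm_exp_ofReal_mul_I x
  have hu : ‖u‖ = 1 := by simpa [u] using norm_exp_ofReal_mul_I ((n + 1) * x / 2)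
  have hconj_u : cexp (-(R.natDegree * x / 2 * I)) = starRingEnd ℂ u := by
    rw [← exp_conj, hdeg]; congr 1; simp [map_ofNat]
  have hu_sq : starRingEnd ℂ u * w ^ (n + 1) = u := by
    rw [← hconj_u, ← exp_nat_mul, ← exp_add, hdeg]; congr 1; push_cast; ring
  have hcoeff0 : R.coeff 0 = starRingEnd ℂ a := by
    simpa [hdeg] using isSelfInversive_iff_coeff.mp hR 0 (Nat.zero_le _)
  have hsplit : symmetricEval R x = (a * u + starRingEnd ℂ (a * u)) + starRingEnd ℂ u * mid := by
    rw [symmetricEval, hconj_u, eval_eq_sum_range, hdeg, sum_range_succ, sum_range_succ',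
      hcoeff0, map_mul, pow_zero, mul_one]
    linear_combination a * hu_sq
  have hmid : ‖mid‖ ≤ ∑ j ∈ range n, ‖R.coeff (j + 1)‖ :=
    (norm_sum_le _ _).trans_eq (by simp [norm_pow, hw])
  calc |(symmetricEval R x).re - 2 * (a * u).re|
      = |(starRingEnd ℂ u * mid).re| := by
        rw [hsplit, add_re, add_conj, ofReal_re, add_sub_cancel_left]
    _ ≤ ‖starRingEnd ℂ u * mid‖ := abs_re_le_norm _
    _ ≤ ∑ j ∈ range n, ‖R.coeff (j + 1)‖ := by rwa [norm_mul, norm_conj, hu, one_mul]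

lemma IsSelfInversive.exists_alternating_nodes {R : ℂ[X]} (hR : IsSelfInversive R 1) {n : ℕ}
    (hdeg : R.natDegree = n + 1)
    (hlt : ∑ j ∈ range n, ‖R.coeff (j + 1)‖ < 2 * ‖R.coeff (n + 1)‖) :
    ∃ θ : ℕ → ℝ, Monotone θ ∧ θ (n + 1) = θ 0 + 2 * π ∧
      ∀ l, 0 < (-1) ^ l * (symmetricEval R (θ l)).re := by
  set a := R.coeff (n + 1)
  have hn : (0 : ℝ) < n + 1 := by positivity
  -- the nodes are where `a e^{i(n+1)θ/2} = ±‖a‖`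
  refine ⟨fun l => 2 * (l * π - arg a) / (n + 1), fun l l' hll' => ?_, ?_, fun l => ?_⟩
  · have : (l : ℝ) ≤ l' := by exact_mod_cast hll'
    dsimp only
    gcongr
  · field_simp
    push_cast
    ring
  · have hnode : a * cexp ((n + 1) * ↑(2 * (l * π - arg a) / (n + 1)) / 2 * I) =
        ‖a‖ * (-1) ^ l := by
      rw [← mul_exp_sub_arg_mul_I a l]
      congr 3
      push_cast
      field_simp
    have hbound := hR.abs_symmetricEval_re_sub_le hdeg (2 * (l * π - arg a) / (n + 1))
    rw [hnode, show (‖a‖ * (-1) ^ l : ℂ) = ((‖a‖ * (-1) ^ l : ℝ) : ℂ) by push_cast; rfl,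
      ofReal_re] at hbound
    rcases neg_one_pow_eq_or ℝ l with h | h <;> rw [h] at hbound ⊢ <;>
      linarith [(abs_le.mp hbound).1, (abs_le.mp hbound).2]

theorem IsSelfInversive.norm_eq_one_of_sum_lt {R : ℂ[X]} {η : ℂ} (hη : ‖η‖ = 1)
    (hR : IsSelfInversive R η) {n : ℕ} (hdeg : R.natDegree = n + 1)
    (hlt : ∑ j ∈ range n, ‖R.coeff (j + 1)‖ < 2 * ‖R.coeff (n + 1)‖) {z : ℂ} (hz : R.IsRoot z) :
    ‖z‖ = 1 := by
  -- with `β ^ 2 = η`, the rotation `C (conj β) * R` is self-inversive with factor `1`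
  obtain ⟨β, hβ⟩ := IsAlgClosed.exists_pow_nat_eq η two_pos
  have hβ1 : ‖β‖ = 1 := by
    rw [← pow_left_inj₀ (norm_nonneg β) zero_le_one two_ne_zero, ← norm_pow, hβ, hη, one_pow]
  have hβ0 : starRingEnd ℂ β ≠ 0 := by simpa using norm_ne_zero_iff.mp (hβ1.trans_ne one_ne_zero)
  set R' := C (starRingEnd ℂ β) * R
  have hR' : IsSelfInversive R' 1 := by
    convert (isSelfInversive_C hβ0).mul hR using 1
    rw [conj_conj, ← hβ, sq, ← mul_assoc, div_mul_cancel₀ _ (by simpa using hβ0), mul_comm,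
      mul_conj', hβ1, ofReal_one, one_pow]
  have hdeg' : R'.natDegree = n + 1 := by rw [natDegree_C_mul hβ0, hdeg]
  have hnorm : ∀ j, ‖R'.coeff j‖ = ‖R.coeff j‖ := by simp [R', hβ1]
  obtain ⟨θ, hθ, hθ2π, halt⟩ := hR'.exists_alternating_nodes hdeg' (by simpa only [hnorm] using hlt)
  obtain ⟨σ, hσ, hσθ⟩ := exists_strictMono_zeros_of_alternating
    (continuous_re.comp (continuous_symmetricEval R')) hθ halt
  refine norm_eq_one_of_isRoot_of_strictMono (ne_zero_of_natDegree_gt (n := 0) (by omega)) hσ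
    (a := θ 0) (fun l hl => ⟨(hθ l.zero_le).trans (hσθ l).1.1.le, ?_⟩)
    (fun l _ => hR'.isRoot_of_symmetricEval_re_eq_zero (hσθ l).2) (by simp [R', hz.eq_zero])
  rw [← hθ2π]
  exact (hσθ l).1.2.trans_le (hθ (by omega))

/-- For `t > 0` this stays self-inversive while its extreme coefficients grow by the factor
`1 + t`, which makes the coefficient inequality strict. -/
noncomputable def perturbEnds (R : ℂ[X]) (t : ℝ) : ℂ[X] :=
  R + C (t : ℂ) * (C R.leadingCoeff * X ^ R.natDegree + C (R.coeff 0))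

lemma coeff_perturbEnds (R : ℂ[X]) (t : ℝ) (k : ℕ) :
    (perturbEnds R t).coeff k = R.coeff k +
      t * ((if k = R.natDegree then R.leadingCoeff else 0) + if k = 0 then R.coeff 0 else 0) := by
  simp [perturbEnds, coeff_X_pow, coeff_C]

lemma natDegree_perturbEnds {R : ℂ[X]} (hR : 0 < R.natDegree) {t : ℝ} (ht : 0 ≤ t) :
    (perturbEnds R t).natDegree = R.natDegree := by
  have hR0 : R ≠ 0 := ne_zero_of_natDegree_gt hR
  refine natDegree_eq_of_le_of_coeff_ne_zero
    (natDegree_le_iff_coeff_eq_zero.mpr fun k hk => ?_) ?_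
  · rw [coeff_perturbEnds, coeff_eq_zero_of_natDegree_lt hk, if_neg hk.ne', if_neg (by omega)]
    simp
  · rw [coeff_perturbEnds, if_pos rfl, if_neg hR.ne', add_zero, ← leadingCoeff, show
      R.leadingCoeff + t * R.leadingCoeff = ((1 + t : ℝ) : ℂ) * R.leadingCoeff by push_cast; ring]
    exact mul_ne_zero (ofReal_ne_zero.mpr (by linarith)) (leadingCoeff_ne_zero.mpr hR0)

lemma IsSelfInversive.perturbEnds {R : ℂ[X]} {η : ℂ} (hR : IsSelfInversive R η)
    (hpos : 0 < R.natDegree) {t : ℝ} (ht : 0 ≤ t) : IsSelfInversive (R.perturbEnds t) η := by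
  rw [isSelfInversive_iff_coeff] at hR ⊢
  rw [natDegree_perturbEnds hpos ht]
  intro k hk
  have h0 := hR 0 (Nat.zero_le _)
  have hN := hR _ le_rfl
  rw [Nat.sub_zero, ← leadingCoeff] at h0
  rw [Nat.sub_self, ← leadingCoeff] at hN
  rw [coeff_perturbEnds, coeff_perturbEnds, hR k hk]
  rcases eq_or_ne k 0 with rfl | hk0
  · simp [hpos.ne, hpos.ne']
    linear_combination t * h0
  rcases eq_or_ne k R.natDegree with rfl | hkN
  · simp [hpos.ne, hpos.ne']
    linear_combination t * hN
  rw [if_neg hkN, if_neg hk0, if_neg (by omega), if_neg (by omega)]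
  simp
lemma IsSelfInversive.pow_abs_norm_sub_one_le {R : ℂ[X]} {η : ℂ} (hη : ‖η‖ = 1)
    (hR : IsSelfInversive R η) {n : ℕ} (hdeg : R.natDegree = n + 1)
    (hle : ∑ j ∈ range n, ‖R.coeff (j + 1)‖ ≤ 2 * ‖R.coeff (n + 1)‖) {z : ℂ} (hz : R.IsRoot z)
    {t : ℝ} (ht : 0 < t) : |‖z‖ - 1| ^ (n + 1) ≤ t * (‖z‖ ^ (n + 1) + 1) := by
  have hpos : 0 < R.natDegree := by omega
  have hlead : R.coeff (n + 1) = R.leadingCoeff := by rw [leadingCoeff, hdeg]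
  have ha : 0 < ‖R.leadingCoeff‖ :=
    norm_pos_iff.mpr (leadingCoeff_ne_zero.mpr (ne_zero_of_natDegree_gt hpos))
  have h1t : ‖(1 + t : ℂ)‖ = 1 + t := by
    rw [show (1 + t : ℂ) = ((1 + t : ℝ) : ℂ) by push_cast; rfl, norm_real,
      Real.norm_of_nonneg (by linarith)]
  have hdeg_t : (R.perturbEnds t).natDegree = n + 1 := by
    rw [natDegree_perturbEnds hpos ht.le, hdeg]
  have htop : (R.perturbEnds t).coeff (n + 1) = (1 + t) * R.leadingCoeff := by
    rw [coeff_perturbEnds, ← hdeg, if_pos rfl, if_neg hpos.ne', hdeg, hlead]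
    ring
  have hmid : ∀ j ∈ range n, (R.perturbEnds t).coeff (j + 1) = R.coeff (j + 1) := by
    intro j hj
    rw [coeff_perturbEnds, if_neg (by have := mem_range.mp hj; omega), if_neg j.succ_ne_zero]
    simp
  have hroots : ∀ b ∈ (R.perturbEnds t).roots, ‖b‖ = 1 := by
    refine fun b hb => (hR.perturbEnds hpos ht.le).norm_eq_one_of_sum_lt hη hdeg_t ?_
      (isRoot_of_mem_roots hb)
    rw [sum_congr rfl fun j hj => by rw [hmid j hj], htop, norm_mul, h1t]
    rw [hlead] at hle
    nlinarith
  have heval : (R.perturbEnds t).eval z = t * (R.leadingCoeff * z ^ (n + 1) + R.coeff 0) := by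
    rw [Polynomial.perturbEnds, eval_add, hz.eq_zero, hdeg]
    simp
  have htri : ‖R.leadingCoeff * z ^ (n + 1) + R.coeff 0‖ ≤
      ‖R.leadingCoeff‖ * (‖z‖ ^ (n + 1) + 1) :=
    (norm_add_le _ _).trans_eq (by rw [norm_mul, norm_pow, hR.norm_coeff_zero hη]; ring)
  have hlow := norm_leadingCoeff_mul_le_norm_eval hroots z
  rw [leadingCoeff, hdeg_t, htop, heval, norm_mul, norm_mul, h1t, norm_real,
    Real.norm_of_nonneg ht.le] at hlow
  refine le_of_mul_le_mul_left ?_ ha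
  nlinarith [mul_le_mul_of_nonneg_left htri ht.le,
    mul_nonneg (mul_nonneg ht.le ha.le) (pow_nonneg (abs_nonneg (‖z‖ - 1)) (n + 1))]

theorem IsSelfInversive.norm_eq_one_of_sum_le {R : ℂ[X]} {η : ℂ} (hη : ‖η‖ = 1)
    (hR : IsSelfInversive R η) {n : ℕ} (hdeg : R.natDegree = n + 1)
    (hle : ∑ j ∈ range n, ‖R.coeff (j + 1)‖ ≤ 2 * ‖R.coeff (n + 1)‖) {z : ℂ} (hz : R.IsRoot z) :
    ‖z‖ = 1 := by
  have hzero : |‖z‖ - 1| ^ (n + 1) ≤ 0 := le_of_forall_pos_le_add fun δ hδ => by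
    simpa [div_mul_cancel₀ δ (by positivity : ‖z‖ ^ (n + 1) + 1 ≠ 0)] using
      hR.pow_abs_norm_sub_one_le hη hdeg hle hz (t := δ / (‖z‖ ^ (n + 1) + 1)) (by positivity)
  have := pow_eq_zero_iff n.succ_ne_zero |>.mp (le_antisymm hzero (by positivity))
  linarith [abs_eq_zero.mp this]

end Polynomial

theorem stmt_11 (P : Polynomial ℂ) (d : ℕ) (ε μ : ℂ) (hd : P.natDegree = d)
    (hAd : P.coeff d ≠ 0) (hε : ‖ε‖ = 1)
    (hsi : ∀ j ≤ d, P.coeff j = ε * (starRingEnd ℂ) (P.coeff (d - j)))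
    (hμ : ‖μ‖ = 1)
    (hineq : (1 / 2 : ℝ) *
        ∑ j ∈ Finset.range d, ‖P.coeff j - μ * P.coeff (j + 1)‖
      ≤ ‖P.coeff d‖) :
    ∀ z : ℂ, P.eval z = 0 → ‖z‖ = 1 := by
  intro z hz
  have hP0 : P ≠ 0 := fun h => hAd (by simp [h])
  have hP : P.IsSelfInversive ε := isSelfInversive_iff_coeff.mpr (by rw [hd]; exact hsi)
  have hQdeg : (P * (X - C μ)).natDegree = d + 1 := by
    rw [natDegree_mul hP0 (X_sub_C_ne_zero μ), natDegree_X_sub_C, hd]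
  have hQtop : (P * (X - C μ)).coeff (d + 1) = P.coeff d := by
    rw [coeff_mul_X_sub_C, coeff_eq_zero_of_natDegree_lt (p := P) (n := d + 1) (by omega), zero_mul,
      sub_zero]
  refine (hP.mul (isSelfInversive_X_sub_C hμ)).norm_eq_one_of_sum_le (by simp [hε, hμ]) hQdeg
    ?_ (by simp [hz])
  simp only [coeff_mul_X_sub_C, hQtop, mul_comm _ μ]
  linarith
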